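/- arXiv:2603.17536 — 6 statements merged into one kernel-verified Lean document; each statement's English description precedes it below -/
import Mathlib

section
/- Let V : H → ℝ, C, α > 0 satisfy 0 ≤ V(y) ≤ C·‖y‖² for all y ∈ H (V is positive semidefinite and PIE bounded). Let x be a trajectory of the PIE T ẋ = A x, and suppose there is d : ℝ → ℝ such that for every t ≥ 0 the function s ↦ V(x(s)) has derivative d(t) at t and d(t) ≤ −α·‖T(x(t))‖² (the derivative of V along the trajectory is PDE negative). Then for every b ≥ 0, ∫₀ᵇ ‖T(x(t))‖² dt ≤ (C/α)·‖x(0)‖², i.e., the trajectory satisfies the finite-energy PIE-to-PDE stability bound. -/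
/-!
Integrating the dissipation inequality `(V ∘ x)' ≤ -α ‖T x‖²` over `[0, b]` gives
`α ∫₀ᵇ ‖T (x t)‖² ≤ V (x 0) - V (x b) ≤ C ‖x 0‖²`, the last step because `V ≥ 0`.
-/

open MeasureTheory Set

theorem mul_integral_le_sub_of_hasDerivAt_le_neg_mul {f g d : ℝ → ℝ} {a b α : ℝ} (hab : a ≤ b)
    (hf : IntegrableOn f (Icc a b)) (hg : ∀ t ∈ Icc a b, HasDerivAt g (d t) t)
    (hdf : ∀ t ∈ Ioo a b, d t ≤ -α * f t) :
    α * ∫ t in a..b, f t ≤ g a - g b := by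
  have h := intervalIntegral.sub_le_integral_of_hasDeriv_right_of_le hab
    (fun t ht => (hg t ht).continuousAt.continuousWithinAt)
    (fun t ht => (hg t (Ioo_subset_Icc_self ht)).hasDerivWithinAt) (hf.const_mul (-α)) hdf
  rw [intervalIntegral.integral_const_mul] at h
  linarith

theorem fe_pie_to_pde_stability_general
    {H : Type*} [NormedAddCommGroup H] [InnerProductSpace ℝ H]
    (T : H →L[ℝ] H) (V : H → ℝ) (C α : ℝ) (hα : 0 < α)
    (hlow : ∀ y : H, 0 ≤ V y)
    (hup : ∀ y : H, V y ≤ C * ‖y‖ ^ 2)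
    (x : ℝ → H) (hx : Differentiable ℝ x)
    (d : ℝ → ℝ)
    (hd : ∀ t : ℝ, 0 ≤ t → HasDerivAt (fun s => V (x s)) (d t) t)
    (hdneg : ∀ t : ℝ, 0 ≤ t → d t ≤ -α * ‖T (x t)‖ ^ 2) :
    ∀ b : ℝ, 0 ≤ b → (∫ t in Set.Icc (0 : ℝ) b, ‖T (x t)‖ ^ 2) ≤ C / α * ‖x 0‖ ^ 2 := by
  intro b hb
  have hcont : Continuous fun t => ‖T (x t)‖ ^ 2 := by
    have := hx.continuous
    fun_prop
  have hdecay := mul_integral_le_sub_of_hasDerivAt_le_neg_mul hb hcont.integrableOn_Icc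
    (fun t ht => hd t ht.1) (fun t ht => hdneg t ht.1.le)
  rw [integral_Icc_eq_integral_Ioc, ← intervalIntegral.integral_of_le hb, div_mul_eq_mul_div,
    le_div_iff₀ hα]
  linarith [hlow (x b), hup (x 0)]

/-- A positive semidefinite, PIE bounded Lyapunov function `V`
(`0 ≤ V y ≤ C‖y‖²`) whose derivative along a trajectory of the PIE `T ẋ = A x`
is PDE negative (`d t ≤ -α‖T (x t)‖²`) certifies the finite-energy PIE-to-PDE
stability bound `∫₀ᵇ ‖T (x t)‖² dt ≤ (C/α)‖x 0‖²` for every `b ≥ 0`. -/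
theorem fe_pie_to_pde_stability
    {H : Type*} [NormedAddCommGroup H] [InnerProductSpace ℝ H] [CompleteSpace H]
    (T A : H →L[ℝ] H) (V : H → ℝ) (C α : ℝ) (hC : 0 < C) (hα : 0 < α)
    (hlow : ∀ y : H, 0 ≤ V y)
    (hup : ∀ y : H, V y ≤ C * ‖y‖ ^ 2)
    (x : ℝ → H) (hx : Differentiable ℝ x)
    (hpie : ∀ t : ℝ, 0 ≤ t → T (deriv x t) = A (x t))
    (d : ℝ → ℝ)
    (hd : ∀ t : ℝ, 0 ≤ t → HasDerivAt (fun s => V (x s)) (d t) t)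
    (hdneg : ∀ t : ℝ, 0 ≤ t → d t ≤ -α * ‖T (x t)‖ ^ 2) :
    ∀ b : ℝ, 0 ≤ b → (∫ t in Set.Icc (0 : ℝ) b, ‖T (x t)‖ ^ 2) ≤ C / α * ‖x 0‖ ^ 2 :=
  fe_pie_to_pde_stability_general T V C α hα hlow hup x hx d hd hdneg
end

section
/- Let V : H → ℝ, C, α > 0 satisfy 0 ≤ V(y) ≤ C·‖y‖² for all y ∈ H (V is positive semidefinite and PIE bounded). Let x be a trajectory of the PIE T ẋ = A x, and suppose there is d : ℝ → ℝ such that for every t ≥ 0 the function s ↦ V(x(s)) has derivative d(t) at t and d(t) ≤ −α·‖x(t)‖² (the derivative of V along the trajectory is PIE negative). Then for every b ≥ 0, ∫₀ᵇ ‖x(t)‖² dt ≤ (C/α)·‖x(0)‖², i.e., the trajectory satisfies the finite-energy PIE stability bound. -/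
open MeasureTheory Set

/-!
`V ∘ x` decreases at rate at least `α ‖x‖²`, so integrating the dissipation inequality over
`[0, b]` gives `α ∫₀ᵇ ‖x‖² ≤ V (x 0) - V (x b) ≤ C ‖x 0‖²`, using `V ≥ 0` at `x b`.
-/

theorem integral_le_sub_of_hasDerivAt_le_neg {W d φ : ℝ → ℝ} {a b : ℝ} (hab : a ≤ b)
    (hW : ∀ t ∈ Icc a b, HasDerivAt W (d t) t) (hφ : IntegrableOn φ (Icc a b))
    (hdφ : ∀ t ∈ Icc a b, d t ≤ -φ t) :
    ∫ t in a..b, φ t ≤ W a - W b := by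
  have hdecay : W b - W a ≤ ∫ t in a..b, -φ t :=
    intervalIntegral.sub_le_integral_of_hasDeriv_right_of_le hab
      (fun t ht => (hW t ht).continuousAt.continuousWithinAt)
      (fun t ht => (hW t (Ioo_subset_Icc_self ht)).hasDerivWithinAt) hφ.neg
      (fun t ht => hdφ t (Ioo_subset_Icc_self ht))
  rw [intervalIntegral.integral_neg] at hdecay
  linarith

theorem fe_pie_stability_general
    {H : Type*} [NormedAddCommGroup H] [InnerProductSpace ℝ H]
    (V : H → ℝ) (C α : ℝ) (hα : 0 < α)
    (hlow : ∀ y : H, 0 ≤ V y)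
    (hup : ∀ y : H, V y ≤ C * ‖y‖ ^ 2)
    (x : ℝ → H) (hx : Differentiable ℝ x)
    (d : ℝ → ℝ)
    (hd : ∀ t : ℝ, 0 ≤ t → HasDerivAt (fun s => V (x s)) (d t) t)
    (hdneg : ∀ t : ℝ, 0 ≤ t → d t ≤ -α * ‖x t‖ ^ 2) :
    ∀ b : ℝ, 0 ≤ b → (∫ t in Set.Icc (0 : ℝ) b, ‖x t‖ ^ 2) ≤ C / α * ‖x 0‖ ^ 2 := by
  intro b hb
  have henergy : Continuous fun t => α * ‖x t‖ ^ 2 :=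
    continuous_const.mul (hx.continuous.norm.pow 2)
  have hdiss : ∫ t in (0 : ℝ)..b, α * ‖x t‖ ^ 2 ≤ V (x 0) - V (x b) :=
    integral_le_sub_of_hasDerivAt_le_neg hb (fun t ht => hd t ht.1)
      henergy.integrableOn_Icc (fun t ht => (hdneg t ht.1).trans_eq (neg_mul _ _))
  rw [intervalIntegral.integral_const_mul, intervalIntegral.integral_of_le hb,
    ← integral_Icc_eq_integral_Ioc] at hdiss
  rw [div_mul_eq_mul_div, le_div_iff₀ hα, mul_comm]
  linarith [hlow (x b), hup (x 0)]

/-- A positive semidefinite, PIE bounded Lyapunov function `V`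
(`0 ≤ V y ≤ C‖y‖²`) whose derivative along a trajectory of the PIE `T ẋ = A x`
is PIE negative (`d t ≤ -α‖x t‖²`) certifies the finite-energy PIE
stability bound `∫₀ᵇ ‖x t‖² dt ≤ (C/α)‖x 0‖²` for every `b ≥ 0`. -/
theorem fe_pie_stability
    {H : Type*} [NormedAddCommGroup H] [InnerProductSpace ℝ H] [CompleteSpace H]
    (T A : H →L[ℝ] H) (V : H → ℝ) (C α : ℝ) (hC : 0 < C) (hα : 0 < α)
    (hlow : ∀ y : H, 0 ≤ V y)
    (hup : ∀ y : H, V y ≤ C * ‖y‖ ^ 2)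
    (x : ℝ → H) (hx : Differentiable ℝ x)
    (hpie : ∀ t : ℝ, 0 ≤ t → T (deriv x t) = A (x t))
    (d : ℝ → ℝ)
    (hd : ∀ t : ℝ, 0 ≤ t → HasDerivAt (fun s => V (x s)) (d t) t)
    (hdneg : ∀ t : ℝ, 0 ≤ t → d t ≤ -α * ‖x t‖ ^ 2) :
    ∀ b : ℝ, 0 ≤ b → (∫ t in Set.Icc (0 : ℝ) b, ‖x t‖ ^ 2) ≤ C / α * ‖x 0‖ ^ 2 :=
  fe_pie_stability_general V C α hα hlow hup x hx d hd hdneg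
end

section
/- Let x be a trajectory of the PIE T ẋ = A x whose derivative x' is continuous on [0, ∞), and suppose the function t ↦ ‖x(t)‖² is Lebesgue integrable on [0, ∞). Then ‖T(x(t))‖ tends to 0 as t → ∞. -/
open MeasureTheory Filter Topology
open scoped RealInnerProductSpace

/-!
Along a trajectory, `d/dt ‖T x(t)‖² = 2 ⟪T x(t), T x'(t)⟫ = 2 ⟪T x(t), A x(t)⟫`, and both
`‖T x(t)‖²` and this derivative are bounded by multiples of `‖x(t)‖²`, hence integrable on
`(0, ∞)`. A function which is integrable on a half-line together with its derivative tends to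
`0` at infinity.
-/

section

variable {α E F : Type*} [MeasurableSpace α] {μ : Measure α}
  [NormedAddCommGroup E] [InnerProductSpace ℝ E] [NormedAddCommGroup F] [InnerProductSpace ℝ F]

theorem abs_inner_apply_le_opNorm_mul_norm_sq (S R : E →L[ℝ] F) (v : E) :
    |⟪S v, R v⟫| ≤ ‖S‖ * ‖R‖ * ‖v‖ ^ 2 :=
  calc |⟪S v, R v⟫| ≤ ‖S v‖ * ‖R v‖ := abs_real_inner_le_norm _ _
    _ ≤ (‖S‖ * ‖v‖) * (‖R‖ * ‖v‖) :=
      mul_le_mul (S.le_opNorm v) (R.le_opNorm v) (norm_nonneg _) (by positivity)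
    _ = ‖S‖ * ‖R‖ * ‖v‖ ^ 2 := by ring

theorem MeasureTheory.Integrable.inner_apply_of_integrable_norm_sq {x : α → E}
    (hx : AEStronglyMeasurable x μ) (hx2 : Integrable (fun t => ‖x t‖ ^ 2) μ)
    (S R : E →L[ℝ] F) : Integrable (fun t => ⟪S (x t), R (x t)⟫) μ :=
  (hx2.const_mul (‖S‖ * ‖R‖)).mono' ((S.continuous.comp_aestronglyMeasurable hx).inner
      (R.continuous.comp_aestronglyMeasurable hx))
    (Eventually.of_forall fun t => abs_inner_apply_le_opNorm_mul_norm_sq S R (x t))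

theorem MeasureTheory.Integrable.norm_apply_sq_of_integrable_norm_sq {x : α → E}
    (hx : AEStronglyMeasurable x μ) (hx2 : Integrable (fun t => ‖x t‖ ^ 2) μ)
    (R : E →L[ℝ] F) : Integrable (fun t => ‖R (x t)‖ ^ 2) μ := by
  simpa only [real_inner_self_eq_norm_sq] using hx2.inner_apply_of_integrable_norm_sq hx R R

end

theorem fe_pie_implies_pde_decay_general
    {H : Type*} [NormedAddCommGroup H] [InnerProductSpace ℝ H]
    (T A : H →L[ℝ] H)
    (x : ℝ → H) (hx : Differentiable ℝ x)
    (hpie : ∀ t : ℝ, 0 ≤ t → T (deriv x t) = A (x t))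
    (hint : IntegrableOn (fun t => ‖x t‖ ^ 2) (Set.Ici (0 : ℝ))) :
    Filter.Tendsto (fun t => ‖T (x t)‖) Filter.atTop (nhds 0) := by
  have hderiv : ∀ t ∈ Set.Ioi (0 : ℝ),
      HasDerivAt (fun s => ‖T (x s)‖ ^ 2) (2 * ⟪T (x t), A (x t)⟫) t := fun t ht => by
    rw [← hpie t (le_of_lt ht)]
    exact (T.hasFDerivAt.comp_hasDerivAt t (hx t).hasDerivAt).norm_sq
  have hint' : IntegrableOn (fun t => ‖x t‖ ^ 2) (Set.Ioi 0) :=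
    hint.mono_set Set.Ioi_subset_Ici_self
  have hmeas := hx.continuous.aestronglyMeasurable (μ := volume.restrict (Set.Ioi (0 : ℝ)))
  have hsq : Tendsto (fun t => ‖T (x t)‖ ^ 2) atTop (𝓝 0) :=
    tendsto_zero_of_hasDerivAt_of_integrableOn_Ioi hderiv
      ((hint'.inner_apply_of_integrable_norm_sq hmeas T A).const_mul 2)
      (hint'.norm_apply_sq_of_integrable_norm_sq hmeas T)
  simpa [Real.sqrt_sq (norm_nonneg _)] using hsq.sqrt

/-- If `x` is a trajectory of the PIE `T ẋ = A x` with derivative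
continuous on `[0, ∞)`, and `t ↦ ‖x t‖²` is Lebesgue integrable on `[0, ∞)`,
then `‖T (x t)‖ → 0` as `t → ∞`. -/
theorem fe_pie_implies_pde_decay
    {H : Type*} [NormedAddCommGroup H] [InnerProductSpace ℝ H] [CompleteSpace H]
    (T A : H →L[ℝ] H)
    (x : ℝ → H) (hx : Differentiable ℝ x)
    (hpie : ∀ t : ℝ, 0 ≤ t → T (deriv x t) = A (x t))
    (hcont : ContinuousOn (deriv x) (Set.Ici (0 : ℝ)))
    (hint : IntegrableOn (fun t => ‖x t‖ ^ 2) (Set.Ici (0 : ℝ))) :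
    Filter.Tendsto (fun t => ‖T (x t)‖) Filter.atTop (nhds 0) :=
  fe_pie_implies_pde_decay_general T A x hx hpie hint
end

section
/- Let Q be a continuous linear operator on H and ε > 0. Suppose: (i) the composition Q∘T is self-adjoint, i.e., ⟪Q(T(y)), z⟫ = ⟪y, Q(T(z))⟫ for all y, z ∈ H; (ii) ⟪y, Q(T(y))⟫ ≥ ε·‖T(y)‖² for all y ∈ H; and (iii) 2·⟪y, Q(A(y))⟫ ≤ 0 for all y ∈ H. Then every trajectory x of the PIE T ẋ = A x satisfies ε·‖T(x(t))‖² ≤ ‖Q∘T‖·‖x(0)‖² for all t ≥ 0; in particular the PIE is Lyapunov PIE-to-PDE stable. -/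
/-! The quadratic form `V(s) = ⟪x s, Q (T (x s))⟫` is a Lyapunov functional: since `Q ∘ T` is
symmetric, `V' = 2⟪x, Q (T ẋ)⟫ = 2⟪x, Q (A x)⟫ ≤ 0` along a trajectory, so `V` decreases on
`[0, ∞)`. Coercivity gives `ε‖T (x t)‖² ≤ V t ≤ V 0`, and Cauchy–Schwarz bounds
`V 0 ≤ ‖Q ∘ T‖ ‖x 0‖²`. -/

open Set
open scoped InnerProductSpace

section QuadraticForm

variable {H : Type*} [NormedAddCommGroup H] [InnerProductSpace ℝ H]

theorem real_inner_apply_self_le_opNorm_mul_sq (S : H →L[ℝ] H) (y : H) :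
    ⟪y, S y⟫_ℝ ≤ ‖S‖ * ‖y‖ ^ 2 :=
  calc ⟪y, S y⟫_ℝ ≤ ‖y‖ * ‖S y‖ := real_inner_le_norm _ _
    _ ≤ ‖y‖ * (‖S‖ * ‖y‖) := by gcongr; exact S.le_opNorm y
    _ = ‖S‖ * ‖y‖ ^ 2 := by ring

theorem HasDerivAt.real_inner_apply_self_of_symm {S : H →L[ℝ] H}
    (hS : ∀ y z, ⟪S y, z⟫_ℝ = ⟪y, S z⟫_ℝ) {x : ℝ → H} {x' : H} {t : ℝ}
    (hx : HasDerivAt x x' t) :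
    HasDerivAt (fun s ↦ ⟪x s, S (x s)⟫_ℝ) (2 * ⟪x t, S x'⟫_ℝ) t := by
  have hSx : HasDerivAt (fun s ↦ S (x s)) (S x') t := S.hasFDerivAt.comp_hasDerivAt t hx
  refine (hx.inner ℝ hSx).congr_deriv ?_
  rw [real_inner_comm _ x', hS]
  ring

theorem antitoneOn_real_inner_apply_self_of_symm {S : H →L[ℝ] H}
    (hS : ∀ y z, ⟪S y, z⟫_ℝ = ⟪y, S z⟫_ℝ) {x x' : ℝ → H} (hx : ∀ t, HasDerivAt x (x' t) t)
    (hdecr : ∀ t, 0 < t → ⟪x t, S (x' t)⟫_ℝ ≤ 0) :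
    AntitoneOn (fun s ↦ ⟪x s, S (x s)⟫_ℝ) (Ici 0) := by
  have hV s := (hx s).real_inner_apply_self_of_symm hS
  refine antitoneOn_of_hasDerivWithinAt_nonpos (convex_Ici 0)
    (continuous_iff_continuousAt.2 fun s ↦ (hV s).continuousAt).continuousOn
    (fun s _ ↦ (hV s).hasDerivWithinAt) ?_
  rintro s hs
  rw [interior_Ici] at hs
  linarith [hdecr s hs]

end QuadraticForm

theorem lpi_pie_to_pde_stability_general
    {H : Type*} [NormedAddCommGroup H] [InnerProductSpace ℝ H]
    (T A Q : H →L[ℝ] H) (ε : ℝ)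
    (hsa : ∀ y z : H, (inner ℝ (Q (T y)) z : ℝ) = (inner ℝ y (Q (T z)) : ℝ))
    (hpos : ∀ y : H, (inner ℝ y (Q (T y)) : ℝ) ≥ ε * ‖T y‖ ^ 2)
    (hneg : ∀ y : H, 2 * (inner ℝ y (Q (A y)) : ℝ) ≤ 0) :
    ∀ x : ℝ → H, Differentiable ℝ x →
      (∀ t : ℝ, 0 ≤ t → T (deriv x t) = A (x t)) →
      ∀ t : ℝ, 0 ≤ t → ε * ‖T (x t)‖ ^ 2 ≤ ‖Q.comp T‖ * ‖x 0‖ ^ 2 := by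
  intro x hx hpie t ht
  have hV : AntitoneOn (fun s ↦ ⟪x s, Q.comp T (x s)⟫_ℝ) (Ici 0) :=
    antitoneOn_real_inner_apply_self_of_symm hsa (fun s ↦ (hx s).hasDerivAt) fun s hs ↦ by
      rw [ContinuousLinearMap.comp_apply, hpie s hs.le]
      linarith [hneg (x s)]
  calc ε * ‖T (x t)‖ ^ 2 ≤ ⟪x t, Q.comp T (x t)⟫_ℝ := hpos (x t)
    _ ≤ ⟪x 0, Q.comp T (x 0)⟫_ℝ := hV self_mem_Ici ht ht
    _ ≤ ‖Q.comp T‖ * ‖x 0‖ ^ 2 := real_inner_apply_self_le_opNorm_mul_sq _ _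

/-- Operator-inequality condition for Lyapunov PIE-to-PDE stability.
If `Q ∘ T` is self-adjoint, `⟪y, Q(T y)⟫ ≥ ε‖T y‖²`, and `2⟪y, Q(A y)⟫ ≤ 0`, then
every trajectory of the PIE `T ẋ = A x` satisfies
`ε‖T (x t)‖² ≤ ‖Q ∘ T‖ ‖x 0‖²` for all `t ≥ 0`. -/
theorem lpi_pie_to_pde_stability
    {H : Type*} [NormedAddCommGroup H] [InnerProductSpace ℝ H] [CompleteSpace H]
    (T A Q : H →L[ℝ] H) (ε : ℝ) (hε : 0 < ε)
    (hsa : ∀ y z : H, (inner ℝ (Q (T y)) z : ℝ) = (inner ℝ y (Q (T z)) : ℝ))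
    (hpos : ∀ y : H, (inner ℝ y (Q (T y)) : ℝ) ≥ ε * ‖T y‖ ^ 2)
    (hneg : ∀ y : H, 2 * (inner ℝ y (Q (A y)) : ℝ) ≤ 0) :
    ∀ x : ℝ → H, Differentiable ℝ x →
      (∀ t : ℝ, 0 ≤ t → T (deriv x t) = A (x t)) →
      ∀ t : ℝ, 0 ≤ t → ε * ‖T (x t)‖ ^ 2 ≤ ‖Q.comp T‖ * ‖x 0‖ ^ 2 :=
  lpi_pie_to_pde_stability_general T A Q ε hsa hpos hneg
end

section
/- Let P be a continuous linear operator on H with ‖P‖ > 0 and ε, α > 0. Suppose: (i) P is self-adjoint, i.e., ⟪P(y), z⟫ = ⟪y, P(z)⟫ for all y, z ∈ H; (ii) ⟪y, P(y)⟫ ≥ ε·‖y‖² for all y ∈ H; and (iii) 2·⟪T(y), P(A(y))⟫ ≤ −α·‖T(y)‖² for all y ∈ H. Then every trajectory x of the PIE T ẋ = A x satisfies ε·‖T(x(t))‖² ≤ ‖P‖·exp(−(α/‖P‖)·t)·‖T(x(0))‖² for all t ≥ 0; in particular the PIE is exponentially PDE stable. -/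
/-!
Lyapunov argument with `V s = ⟪T x(s), P (T x(s))⟫`. By symmetry of `P` and the PIE,
`V' = 2 ⟪T x, P (A x)⟫ ≤ -α ‖T x‖² ≤ -(α / ‖P‖) V`, since `V ≤ ‖P‖ ‖T x‖²`. Grönwall gives
`V t ≤ V 0 · exp (-(α / ‖P‖) t)`, and the two sides are compared with `‖T x‖²` through the
coercivity bound `ε ‖y‖² ≤ ⟪y, P y⟫` and the bound `V 0 ≤ ‖P‖ ‖T x(0)‖²`.
-/

open Real Set
open scoped InnerProductSpace

theorem le_mul_exp_of_hasDerivAt_le_mul {f f' : ℝ → ℝ} {K a b : ℝ} (hab : a ≤ b)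
    (hf : ∀ s ∈ Icc a b, HasDerivAt f (f' s) s) (hbound : ∀ s ∈ Ico a b, f' s ≤ K * f s) :
    f b ≤ f a * exp (K * (b - a)) := by
  have key := le_gronwallBound_of_liminf_deriv_right_le (ε := 0)
    (fun s hs => (hf s hs).continuousAt.continuousWithinAt)
    (fun s hs _ hr => (hf s (Ico_subset_Icc_self hs)).hasDerivWithinAt.liminf_right_slope_le hr)
    le_rfl (by simpa using hbound) b (right_mem_Icc.2 hab)
  rwa [gronwallBound_ε0] at key

section InnerProductSpace

variable {E : Type*} [NormedAddCommGroup E] [InnerProductSpace ℝ E]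

theorem ContinuousLinearMap.real_inner_self_apply_le_opNorm_mul_sq (P : E →L[ℝ] E) (y : E) :
    ⟪y, P y⟫_ℝ ≤ ‖P‖ * ‖y‖ ^ 2 :=
  calc ⟪y, P y⟫_ℝ ≤ ‖y‖ * ‖P y‖ := real_inner_le_norm _ _
    _ ≤ ‖y‖ * (‖P‖ * ‖y‖) := by gcongr; exact P.le_opNorm y
    _ = ‖P‖ * ‖y‖ ^ 2 := by ring

theorem HasDerivAt.real_inner_apply_self_of_isSymmetric {P : E →L[ℝ] E}
    (hP : (P : E →ₗ[ℝ] E).IsSymmetric) {u : ℝ → E} {u' : E} {s : ℝ} (hu : HasDerivAt u u' s) :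
    HasDerivAt (fun r => ⟪u r, P (u r)⟫_ℝ) (2 * ⟪u s, P u'⟫_ℝ) s := by
  have h := hu.inner ℝ (P.hasFDerivAt.comp_hasDerivAt s hu)
  have hsymm : ⟪u', P (u s)⟫_ℝ = ⟪u s, P u'⟫_ℝ := (hP u' (u s)).symm.trans (real_inner_comm _ _)
  refine h.congr_deriv ?_
  rw [Function.comp_apply, hsymm]
  ring

theorem two_mul_inner_le_neg_div_opNorm_mul_inner {P : E →L[ℝ] E} {y z : E} {α : ℝ}
    (hα : 0 ≤ α) (hP : ‖P‖ ≠ 0) (hdecay : 2 * ⟪y, P z⟫_ℝ ≤ -α * ‖y‖ ^ 2) :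
    2 * ⟪y, P z⟫_ℝ ≤ -(α / ‖P‖) * ⟪y, P y⟫_ℝ :=
  calc 2 * ⟪y, P z⟫_ℝ ≤ -α * ‖y‖ ^ 2 := hdecay
    _ = -(α / ‖P‖) * (‖P‖ * ‖y‖ ^ 2) := by field_simp
    _ ≤ -(α / ‖P‖) * ⟪y, P y⟫_ℝ :=
        mul_le_mul_of_nonpos_left (P.real_inner_self_apply_le_opNorm_mul_sq y)
          (neg_nonpos.2 (div_nonneg hα (norm_nonneg P)))

end InnerProductSpace

theorem lpi_exp_pde_stability_general
    {H : Type*} [NormedAddCommGroup H] [InnerProductSpace ℝ H]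
    (T A P : H →L[ℝ] H) (ε α : ℝ) (hα : 0 < α) (hP : 0 < ‖P‖)
    (hsa : ∀ y z : H, (inner ℝ (P y) z : ℝ) = (inner ℝ y (P z) : ℝ))
    (hpos : ∀ y : H, (inner ℝ y (P y) : ℝ) ≥ ε * ‖y‖ ^ 2)
    (hneg : ∀ y : H, 2 * (inner ℝ (T y) (P (A y)) : ℝ) ≤ -α * ‖T y‖ ^ 2) :
    ∀ x : ℝ → H, Differentiable ℝ x →
      (∀ t : ℝ, 0 ≤ t → T (deriv x t) = A (x t)) →
      ∀ t : ℝ, 0 ≤ t →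
        ε * ‖T (x t)‖ ^ 2 ≤ ‖P‖ * Real.exp (-(α / ‖P‖) * t) * ‖T (x 0)‖ ^ 2 := by
  intro x hx hode t ht
  have hV : ∀ s, HasDerivAt (fun r => ⟪T (x r), P (T (x r))⟫_ℝ)
      (2 * ⟪T (x s), P (T (deriv x s))⟫_ℝ) s := fun s =>
    (T.hasFDerivAt.comp_hasDerivAt s (hx s).hasDerivAt).real_inner_apply_self_of_isSymmetric hsa
  have hVdecay : ∀ s ∈ Ico 0 t, 2 * ⟪T (x s), P (T (deriv x s))⟫_ℝ
      ≤ -(α / ‖P‖) * ⟪T (x s), P (T (x s))⟫_ℝ := fun s hs => by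
    rw [hode s hs.1]
    exact two_mul_inner_le_neg_div_opNorm_mul_inner hα.le hP.ne' (hneg (x s))
  have hgronwall := le_mul_exp_of_hasDerivAt_le_mul ht (fun s _ => hV s) hVdecay
  calc ε * ‖T (x t)‖ ^ 2 ≤ ⟪T (x t), P (T (x t))⟫_ℝ := hpos _
    _ ≤ ⟪T (x 0), P (T (x 0))⟫_ℝ * exp (-(α / ‖P‖) * (t - 0)) := hgronwall
    _ ≤ ‖P‖ * ‖T (x 0)‖ ^ 2 * exp (-(α / ‖P‖) * (t - 0)) := by
        gcongr; exact P.real_inner_self_apply_le_opNorm_mul_sq _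
    _ = ‖P‖ * exp (-(α / ‖P‖) * t) * ‖T (x 0)‖ ^ 2 := by rw [sub_zero]; ring

/-- Operator-inequality condition for exponential PDE stability.
If `P` is self-adjoint with `‖P‖ > 0`, `⟪y, P y⟫ ≥ ε‖y‖²`, and
`2⟪T y, P (A y)⟫ ≤ -α‖T y‖²`, then every trajectory of the PIE `T ẋ = A x`
satisfies `ε‖T (x t)‖² ≤ ‖P‖ exp(-(α/‖P‖) t) ‖T (x 0)‖²` for all `t ≥ 0`. -/
theorem lpi_exp_pde_stability
    {H : Type*} [NormedAddCommGroup H] [InnerProductSpace ℝ H] [CompleteSpace H]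
    (T A P : H →L[ℝ] H) (ε α : ℝ) (hε : 0 < ε) (hα : 0 < α) (hP : 0 < ‖P‖)
    (hsa : ∀ y z : H, (inner ℝ (P y) z : ℝ) = (inner ℝ y (P z) : ℝ))
    (hpos : ∀ y : H, (inner ℝ y (P y) : ℝ) ≥ ε * ‖y‖ ^ 2)
    (hneg : ∀ y : H, 2 * (inner ℝ (T y) (P (A y)) : ℝ) ≤ -α * ‖T y‖ ^ 2) :
    ∀ x : ℝ → H, Differentiable ℝ x →
      (∀ t : ℝ, 0 ≤ t → T (deriv x t) = A (x t)) →
      ∀ t : ℝ, 0 ≤ t →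
        ε * ‖T (x t)‖ ^ 2 ≤ ‖P‖ * Real.exp (-(α / ‖P‖) * t) * ‖T (x 0)‖ ^ 2 :=
  lpi_exp_pde_stability_general T A P ε α hα hP hsa hpos hneg
end

section
/- Let a < b be real numbers, n ≥ 1 a natural number, and N_a, N_b real n×n matrices. For t ∈ ℝ let W(t) be the n×n matrix with entries W(t)_{i,j} = t^{j−i}/(j−i)! for i ≤ j and 0 for i > j (indices i, j ∈ {0, …, n−1}). Assume the matrix N_a + N_b·W(b−a) is invertible and set P = (N_a + N_b·W(b−a))⁻¹·N_b·W(b−a). Let e₁(s) ∈ ℝⁿ be the vector with i-th component s^i/i! and eₙ(θ) ∈ ℝⁿ the vector with i-th component θ^{n−1−i}/(n−1−i)! (i = 0, …, n−1). Define the kernel G(s,θ) = e₁(s−a)ᵀ·(I−P)·eₙ(a−θ) for θ ≤ s and G(s,θ) = −e₁(s−a)ᵀ·P·eₙ(a−θ) for s < θ, and the operator (T x)(s) = ∫ₐᵇ G(s,θ)·x(θ) dθ. Say that a function g satisfies the boundary conditions if for each i ∈ {0, …, n−1}: Σ_{j=0}^{n−1} (N_a)_{i,j}·g^{(j)}(a)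 + (N_b)_{i,j}·g^{(j)}(b) = 0, where g^{(j)} is the j-th derivative. Then: (1) for every continuous x : ℝ → ℝ, the function u = T x is n-times continuously differentiable on [a,b], satisfies the boundary conditions, and u^{(n)}(s) = x(s) for all s ∈ [a,b]; and (2) for every g : ℝ → ℝ that is n-times continuously differentiable on [a,b] and satisfies the boundary conditions, (T g^{(n)})(s) = g(s) for all s ∈ [a,b]. -/
/-!
On `[a, b]` the kernel operator is `T x (s) = e₁(s - a) ⬝ (m(s) - P m(b))` with the moment vector
`m(s) = ∫ₐˢ x(θ) eₙ(a - θ) dθ`. Differentiating `j < n` times gives row `j` of `W(s - a)` applied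
to `m(s) - P m(b)`. Indeed, by the binomial theorem `W(t) eₙ(u) = eₙ(t + u)`, and `eₙ(0)` is the
last unit vector, so the terms coming from `m'(s) = x(s) eₙ(a - s)` vanish except in the last
step, which yields `(T x)⁽ⁿ⁾ = x`. The jets of `T x` at `a` and `b` are `-P m(b)` and
`W(b - a)(I - P) m(b)`, and the boundary conditions reduce to
`(N_a + N_b W(b - a)) P = N_b W(b - a)`.

Conversely, `g - T (g⁽ⁿ⁾)` has vanishing `n`-th derivative, so it is a polynomial whose jets at
`a` and `b` are `ε` and `W(b - a) ε`; the boundary conditions give `(N_a + N_b W(b - a)) ε = 0`,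
hence `ε = 0`.
-/

open MeasureTheory Matrix

/-- The matrix `W(t)` with entries `W(t)_{i,j} = t^(j-i)/(j-i)!` for `i ≤ j`
and `0` otherwise. -/
noncomputable def Wmat (n : ℕ) (t : ℝ) : Matrix (Fin n) (Fin n) ℝ :=
  fun i j => if (i : ℕ) ≤ (j : ℕ) then
    t ^ ((j : ℕ) - (i : ℕ)) / Nat.factorial ((j : ℕ) - (i : ℕ)) else 0

/-- The vector `e₁(s)` with `i`-th component `s^i/i!`. -/
noncomputable def e1vec (n : ℕ) (s : ℝ) : Fin n → ℝ :=
  fun i => s ^ (i : ℕ) / Nat.factorial (i : ℕ)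

/-- The vector `eₙ(θ)` with `i`-th component `θ^(n-1-i)/(n-1-i)!`. -/
noncomputable def envec (n : ℕ) (θ : ℝ) : Fin n → ℝ :=
  fun i => θ ^ (n - 1 - (i : ℕ)) / Nat.factorial (n - 1 - (i : ℕ))

open Set Finset Nat intervalIntegral

theorem sum_range_pow_div_factorial_mul (m : ℕ) (u v : ℝ) :
    ∑ k ∈ range (m + 1), u ^ k / k ! * (v ^ (m - k) / (m - k)!) = (u + v) ^ m / m ! := by
  rw [add_pow, Finset.sum_div]
  refine sum_congr rfl fun k hk => ?_
  rw [Nat.cast_choose ℝ (Nat.lt_succ_iff.mp (mem_range.mp hk))]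
  field_simp

theorem Set.Icc_inter_Iic_of_le {α : Type*} [LinearOrder α] {a b c : α} (h : c ≤ b) :
    Icc a b ∩ Iic c = Icc a c := by
  rw [← Ici_inter_Iic, inter_assoc, Iic_inter_Iic, inf_of_le_right h, Ici_inter_Iic]

theorem ContinuousOn.exists_continuous_eqOn_Icc {α β : Type*} [LinearOrder α] [TopologicalSpace α]
    [OrderTopology α] [TopologicalSpace β] {a b : α} (hab : a ≤ b) {f : α → β}
    (hf : ContinuousOn f (Icc a b)) : ∃ g : α → β, Continuous g ∧ EqOn g f (Icc a b) :=
  ⟨IccExtend hab ((Icc a b).domRestrict f), hf.domRestrict.Icc_extend',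
    fun _ hx => IccExtend_of_mem hab _ hx⟩

theorem HasDerivAt.dotProduct {ι : Type*} [Fintype ι] {f g : ℝ → ι → ℝ} {f' g' : ι → ℝ} {x : ℝ}
    (hf : HasDerivAt f f' x) (hg : HasDerivAt g g' x) :
    HasDerivAt (fun t => f t ⬝ᵥ g t) (f' ⬝ᵥ g x + f x ⬝ᵥ g') x := by
  simp only [_root_.dotProduct, ← Finset.sum_add_distrib]
  exact HasDerivAt.fun_sum fun i _ =>
    ((hasDerivAt_pi.mp hf i).mul (hasDerivAt_pi.mp hg i)).congr_deriv (by ring)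

theorem integral_dotProduct {ι X : Type*} [Fintype ι] [MeasurableSpace X] {μ : Measure X}
    (e : ι → ℝ) {f : X → ι → ℝ} (hf : Integrable f μ) :
    ∫ x, e ⬝ᵥ f x ∂μ = e ⬝ᵥ ∫ x, f x ∂μ :=
  (LinearMap.toContinuousLinearMap (dotProductBilin ℝ ℝ e)).integral_comp_comm hf

section DerivativeChain

variable {𝕜 E : Type*} [NontriviallyNormedField 𝕜] [NormedAddCommGroup E] [NormedSpace 𝕜 E]
  {f : ℕ → 𝕜 → E} {N : ℕ}

theorem contDiff_of_hasDerivAt_succ (hf : ∀ k < N, ∀ x, HasDerivAt (f k) (f (k + 1) x) x)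
    (hN : Continuous (f N)) : ContDiff 𝕜 N (f 0) := by
  induction N generalizing f with
  | zero => exact contDiff_zero.mpr hN
  | succ N ih =>
    have hderiv : deriv (f 0) = f 1 := funext fun x => (hf 0 (by omega) x).deriv
    rw [Nat.cast_succ, contDiff_succ_iff_deriv, hderiv]
    exact ⟨fun x => (hf 0 (by omega) x).differentiableAt, by simp,
      ih (f := fun k => f (k + 1)) (fun k hk => hf (k + 1) (by omega)) hN⟩

theorem iteratedDerivWithin_eqOn_of_hasDerivAt_succ {s : Set 𝕜} (hs : UniqueDiffOn 𝕜 s)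
    (hf : ∀ k < N, ∀ x, HasDerivAt (f k) (f (k + 1) x) x) {j : ℕ} (hj : j ≤ N) :
    EqOn (iteratedDerivWithin j (f 0) s) (f j) s := by
  induction j with
  | zero => simp [EqOn]
  | succ j ih =>
    intro x hx
    rw [iteratedDerivWithin_succ, derivWithin_congr (ih (by omega)) (ih (by omega) hx)]
    exact (hf j (by omega) x).hasDerivWithinAt.derivWithin (hs x hx)

end DerivativeChain

/-- Row `j` of `Wmat n t`, extended by zero to `j ≥ n`; it is the `j`-th derivative of
`e1vec n t`. -/
noncomputable def taylorRow (n j : ℕ) (t : ℝ) : Fin n → ℝ :=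
  fun i => if j ≤ (i : ℕ) then t ^ ((i : ℕ) - j) / ((i : ℕ) - j)! else 0

theorem taylorRow_zero_left (n : ℕ) : taylorRow n 0 = e1vec n := by
  ext t i
  simp [taylorRow, e1vec]

theorem taylorRow_of_le {n j : ℕ} (h : n ≤ j) (t : ℝ) : taylorRow n j t = 0 := by
  ext i
  simp [taylorRow, show ¬ j ≤ (i : ℕ) by omega]

theorem taylorRow_dotProduct {n j : ℕ} (hj : j < n) (t : ℝ) (c : Fin n → ℝ) :
    taylorRow n j t ⬝ᵥ c = (Wmat n t *ᵥ c) ⟨j, hj⟩ :=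
  rfl

theorem Wmat_zero (n : ℕ) : Wmat n 0 = 1 := by
  ext i j
  rcases lt_trichotomy (i : ℕ) j with h | h | h
  · simp [Wmat, h.le, Fin.ne_of_lt h, Nat.sub_ne_zero_of_lt h]
  · simp [Wmat, Fin.ext h, one_apply]
  · simp [Wmat, Fin.ne_of_gt h, h.not_ge]

theorem taylorRow_zero_dotProduct {n j : ℕ} (hj : j < n) (c : Fin n → ℝ) :
    taylorRow n j 0 ⬝ᵥ c = c ⟨j, hj⟩ := by
  rw [taylorRow_dotProduct hj, Wmat_zero, one_mulVec]

theorem hasDerivAt_taylorRow (n j : ℕ) (t : ℝ) :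
    HasDerivAt (taylorRow n j) (taylorRow n (j + 1) t) t := by
  refine hasDerivAt_pi.mpr fun i => ?_
  simp only [taylorRow]
  by_cases hji : j + 1 ≤ (i : ℕ)
  · obtain ⟨m, hm⟩ : ∃ m, (i : ℕ) - j = m + 1 := ⟨(i : ℕ) - j - 1, by omega⟩
    simp only [if_pos (by omega : j ≤ (i : ℕ)), if_pos hji, hm,
      show (i : ℕ) - (j + 1) = m by omega]
    refine ((hasDerivAt_pow (m + 1) t).div_const _).congr_deriv ?_
    rw [Nat.factorial_succ]
    push_cast
    field_simp
  · rw [if_neg hji]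
    split_ifs with hij
    · rw [show (i : ℕ) - j = 0 by omega]
      simpa using hasDerivAt_const t (1 : ℝ)
    · exact hasDerivAt_const t 0

theorem taylorRow_dotProduct_envec (n j : ℕ) (t u : ℝ) :
    taylorRow n j t ⬝ᵥ envec n u =
      if j < n then (t + u) ^ (n - 1 - j) / (n - 1 - j)! else 0 := by
  split_ifs with hj
  · obtain ⟨m, rfl⟩ : ∃ m, n = j + (m + 1) := ⟨n - 1 - j, by omega⟩
    simp only [dotProduct, taylorRow, envec]
    rw [Fin.sum_univ_eq_sum_range (fun i => (if j ≤ i then t ^ (i - j) / (i - j)! else 0) *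
      (u ^ (j + (m + 1) - 1 - i) / (j + (m + 1) - 1 - i)!)), sum_range_add,
      show j + (m + 1) - 1 - j = m by omega, ← sum_range_pow_div_factorial_mul]
    rw [sum_eq_zero fun i hi => by simp [(mem_range.mp hi).not_ge], zero_add]
    refine sum_congr rfl fun k _ => ?_
    simp [show j + m - (j + k) = m - k by omega]
  · rw [taylorRow_of_le (not_lt.mp hj), zero_dotProduct]

noncomputable def momentVec (n : ℕ) (a : ℝ) (x : ℝ → ℝ) (s : ℝ) : Fin n → ℝ :=
  ∫ θ in a..s, x θ • envec n (a - θ)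

theorem continuous_smul_envec (n : ℕ) (a : ℝ) {x : ℝ → ℝ} (hx : Continuous x) :
    Continuous fun θ => x θ • envec n (a - θ) := by
  unfold envec
  fun_prop

theorem hasDerivAt_momentVec (n : ℕ) (a : ℝ) {x : ℝ → ℝ} (hx : Continuous x) (s : ℝ) :
    HasDerivAt (momentVec n a x) (x s • envec n (a - s)) s :=
  have hc := continuous_smul_envec n a hx
  integral_hasDerivAt_right (hc.intervalIntegrable _ _)
    hc.stronglyMeasurable.stronglyMeasurableAtFilter hc.continuousAt

theorem setIntegral_Icc_eq_momentVec (n : ℕ) {a s : ℝ} (has : a ≤ s) (x : ℝ → ℝ) :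
    ∫ θ in Icc a s, x θ • envec n (a - θ) = momentVec n a x s := by
  rw [momentVec, integral_of_le has, integral_Icc_eq_integral_Ioc]

theorem setIntegral_greenKernel_mul {n : ℕ} {a b s : ℝ} (hs : s ∈ Icc a b)
    (P : Matrix (Fin n) (Fin n) ℝ) {x : ℝ → ℝ} (hx : Continuous x) :
    ∫ θ in Icc a b, (if θ ≤ s then e1vec n (s - a) ⬝ᵥ ((1 - P) *ᵥ envec n (a - θ))
        else -(e1vec n (s - a) ⬝ᵥ (P *ᵥ envec n (a - θ)))) * x θ =
      e1vec n (s - a) ⬝ᵥ (momentVec n a x s - P *ᵥ momentVec n a x b) := by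
  set e := e1vec n (s - a)
  set f := fun θ => x θ • envec n (a - θ)
  have hf : Continuous f := continuous_smul_envec n a hx
  have hsplit : ∀ θ, (if θ ≤ s then e ⬝ᵥ ((1 - P) *ᵥ envec n (a - θ))
      else -(e ⬝ᵥ (P *ᵥ envec n (a - θ)))) * x θ =
      (Iic s).indicator (fun θ => e ⬝ᵥ f θ) θ - (e ᵥ* P) ⬝ᵥ f θ := by
    intro θ
    by_cases h : θ ≤ s
    · rw [if_pos h, indicator_of_mem (Set.mem_Iic.mpr h), sub_mulVec, one_mulVec,
        dotProduct_sub, dotProduct_mulVec]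
      simp only [f, dotProduct_smul, smul_eq_mul]
      ring
    · rw [if_neg h, indicator_of_notMem (by simpa using h), dotProduct_mulVec]
      simp only [f, dotProduct_smul, smul_eq_mul]
      ring
  simp_rw [hsplit]
  rw [integral_sub
      ((continuous_const.dotProduct hf).integrableOn_Icc.indicator measurableSet_Iic)
      (continuous_const.dotProduct hf).integrableOn_Icc,
    setIntegral_indicator measurableSet_Iic, Icc_inter_Iic_of_le hs.2,
    integral_dotProduct _ hf.integrableOn_Icc, integral_dotProduct _ hf.integrableOn_Icc,
    setIntegral_Icc_eq_momentVec n hs.1, setIntegral_Icc_eq_momentVec n (hs.1.trans hs.2),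
    dotProduct_sub, dotProduct_mulVec]

/-- For `1 ≤ n`, `greenJet n a b P x 0` is the kernel operator applied to `x` on `[a, b]`, and
`greenJet n a b P x j` is its `j`-th derivative for `j ≤ n`; since `taylorRow n n = 0`, the last
one is `x` itself. -/
noncomputable def greenJet (n : ℕ) (a b : ℝ) (P : Matrix (Fin n) (Fin n) ℝ) (x : ℝ → ℝ)
    (j : ℕ) (s : ℝ) : ℝ :=
  taylorRow n j (s - a) ⬝ᵥ (momentVec n a x s - P *ᵥ momentVec n a x b) + if j = n then x s else 0

noncomputable def jetWithin (n : ℕ) (f : ℝ → ℝ) (s : Set ℝ) (x : ℝ) : Fin n → ℝ :=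
  fun j => iteratedDerivWithin j f s x

def SatisfiesBC {n : ℕ} (Na Nb : Matrix (Fin n) (Fin n) ℝ) (a b : ℝ) (f : ℝ → ℝ) : Prop :=
  Na *ᵥ jetWithin n f (Icc a b) a + Nb *ᵥ jetWithin n f (Icc a b) b = 0

section Green

variable {n : ℕ} {a b : ℝ} (P : Matrix (Fin n) (Fin n) ℝ) {x : ℝ → ℝ}

theorem hasDerivAt_greenJet (hx : Continuous x) {j : ℕ} (hj : j < n) (s : ℝ) :
    HasDerivAt (greenJet n a b P x j) (greenJet n a b P x (j + 1) s) s := by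
  have hderiv := ((hasDerivAt_taylorRow n j (s - a)).comp_sub_const s a).dotProduct
    ((hasDerivAt_momentVec n a hx s).sub_const (P *ᵥ momentVec n a x b))
  have hjump : taylorRow n j (s - a) ⬝ᵥ (x s • envec n (a - s)) = if j + 1 = n then x s else 0 := by
    rw [dotProduct_smul, taylorRow_dotProduct_envec, if_pos hj, show s - a + (a - s) = 0 by ring]
    split_ifs with hlast
    · simp [show n - 1 - j = 0 by omega]
    · simp [zero_pow (show n - 1 - j ≠ 0 by omega)]
  rw [hjump] at hderiv
  convert hderiv using 1
  · funext t
    simp [greenJet, hj.ne]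
  · simp [greenJet]

theorem greenJet_self (s : ℝ) : greenJet n a b P x n s = x s := by
  simp [greenJet, taylorRow_of_le le_rfl]

theorem greenJet_zero (hn : 1 ≤ n) (s : ℝ) :
    greenJet n a b P x 0 s = e1vec n (s - a) ⬝ᵥ (momentVec n a x s - P *ᵥ momentVec n a x b) := by
  simp [greenJet, taylorRow_zero_left, show 0 ≠ n by omega]

theorem greenJet_left :
    (fun j : Fin n => greenJet n a b P x j a) = -(P *ᵥ momentVec n a x b) := by
  ext j
  simp [greenJet, j.isLt.ne, taylorRow_zero_dotProduct j.isLt, momentVec]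

theorem greenJet_right : (fun j : Fin n => greenJet n a b P x j b) =
    Wmat n (b - a) *ᵥ (momentVec n a x b - P *ᵥ momentVec n a x b) := by
  ext j
  simp [greenJet, j.isLt.ne, taylorRow_dotProduct j.isLt]

theorem contDiff_greenJet_zero (hx : Continuous x) : ContDiff ℝ n (greenJet n a b P x 0) :=
  contDiff_of_hasDerivAt_succ (f := greenJet n a b P x) (fun _ hk => hasDerivAt_greenJet P hx hk)
    (by simpa only [funext (greenJet_self P)] using hx)

theorem iteratedDerivWithin_eqOn_greenJet {s : Set ℝ} (hs : UniqueDiffOn ℝ s) (hx : Continuous x)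
    {u : ℝ → ℝ} (hu : EqOn u (greenJet n a b P x 0) s) {j : ℕ} (hj : j ≤ n) :
    EqOn (iteratedDerivWithin j u s) (greenJet n a b P x j) s := fun _ ht =>
  (iteratedDerivWithin_congr hu ht).trans (iteratedDerivWithin_eqOn_of_hasDerivAt_succ
    (f := greenJet n a b P x) hs (fun _ hk => hasDerivAt_greenJet P hx hk) hj ht)

theorem satisfiesBC_of_eqOn_greenJet {Na Nb : Matrix (Fin n) (Fin n) ℝ} (hab : a < b)
    (hP : (Na + Nb * Wmat n (b - a)) * P = Nb * Wmat n (b - a)) (hx : Continuous x)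
    {u : ℝ → ℝ} (hu : EqOn u (greenJet n a b P x 0) (Icc a b)) : SatisfiesBC Na Nb a b u := by
  have hjet : ∀ s ∈ Icc a b, jetWithin n u (Icc a b) s = fun j : Fin n => greenJet n a b P x j s :=
    fun s hs => funext fun j =>
      iteratedDerivWithin_eqOn_greenJet P (uniqueDiffOn_Icc hab) hx hu j.isLt.le hs
  have hzero : (Nb * Wmat n (b - a) - (Na + Nb * Wmat n (b - a)) * P) *ᵥ momentVec n a x b = 0 := by
    rw [hP, sub_self, zero_mulVec]
  rw [SatisfiesBC, hjet a (left_mem_Icc.mpr hab.le), hjet b (right_mem_Icc.mpr hab.le),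
    greenJet_left, greenJet_right, ← hzero]
  simp only [sub_mulVec, add_mul, add_mulVec, mulVec_neg, mulVec_sub, mulVec_mulVec,
    Matrix.mul_assoc]
  abel

end Green

section Uniqueness

variable {n : ℕ} {a b : ℝ} {Na Nb : Matrix (Fin n) (Fin n) ℝ} {f g : ℝ → ℝ}

theorem iteratedDerivWithin_eqOn_taylorRow_dotProduct (hab : a < b)
    (hf : ContDiffOn ℝ n f (Icc a b)) (hfn : EqOn (iteratedDerivWithin n f (Icc a b)) 0 (Icc a b)) :
    ∀ j ≤ n, EqOn (iteratedDerivWithin j f (Icc a b))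
      (fun s => taylorRow n j (s - a) ⬝ᵥ jetWithin n f (Icc a b) a) (Icc a b) := by
  have hud := uniqueDiffOn_Icc hab
  set c := jetWithin n f (Icc a b) a
  have hpoly : ∀ k y, HasDerivAt (fun s => taylorRow n k (s - a) ⬝ᵥ c)
      (taylorRow n (k + 1) (y - a) ⬝ᵥ c) y := fun k y => by
    simpa using ((hasDerivAt_taylorRow n k (y - a)).comp_sub_const y a).dotProduct
      (hasDerivAt_const y c)
  intro j hj
  induction hj using Nat.decreasingInduction with
  | self => exact fun s hs => by simp [taylorRow_of_le le_rfl, hfn hs]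
  | of_succ k hk ih =>
    refine fun s hs => eq_of_derivWithin_eq
      (hf.differentiableOn_iteratedDerivWithin (by exact_mod_cast hk) hud)
      (fun y _ => (hpoly k y).differentiableAt.differentiableWithinAt)
      (fun y hy => ?_) (by rw [sub_self, taylorRow_zero_dotProduct hk]; rfl) s hs
    rw [← iteratedDerivWithin_succ, ih (Ico_subset_Icc_self hy),
      (hpoly k y).hasDerivWithinAt.derivWithin (hud y (Ico_subset_Icc_self hy))]

theorem SatisfiesBC.sub (hbf : SatisfiesBC Na Nb a b f) (hbg : SatisfiesBC Na Nb a b g)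
    (hab : a < b) (hf : ContDiffOn ℝ n f (Icc a b)) (hg : ContDiffOn ℝ n g (Icc a b)) :
    SatisfiesBC Na Nb a b (f - g) := by
  have hjet : ∀ s ∈ Icc a b,
      jetWithin n (f - g) (Icc a b) s = jetWithin n f (Icc a b) s - jetWithin n g (Icc a b) s :=
    fun s hs => funext fun j => iteratedDerivWithin_sub hs (uniqueDiffOn_Icc hab)
      (hf.of_le (by exact_mod_cast j.isLt.le) s hs) (hg.of_le (by exact_mod_cast j.isLt.le) s hs)
  rw [SatisfiesBC, hjet a (left_mem_Icc.mpr hab.le), hjet b (right_mem_Icc.mpr hab.le),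
    mulVec_sub, mulVec_sub, sub_add_sub_comm, hbf, hbg, sub_zero]

theorem SatisfiesBC.eqOn_zero (hbf : SatisfiesBC Na Nb a b f) (hab : a < b)
    (hinv : IsUnit (Na + Nb * Wmat n (b - a))) (hf : ContDiffOn ℝ n f (Icc a b))
    (hfn : EqOn (iteratedDerivWithin n f (Icc a b)) 0 (Icc a b)) : EqOn f 0 (Icc a b) := by
  have htaylor := iteratedDerivWithin_eqOn_taylorRow_dotProduct hab hf hfn
  have hright : jetWithin n f (Icc a b) b = Wmat n (b - a) *ᵥ jetWithin n f (Icc a b) a :=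
    funext fun j => (htaylor j j.isLt.le (right_mem_Icc.mpr hab.le)).trans
      (taylorRow_dotProduct j.isLt _ _)
  have hleft : jetWithin n f (Icc a b) a = 0 := mulVec_injective_iff_isUnit.mpr hinv <| by
    rw [add_mulVec, ← mulVec_mulVec, ← hright, hbf, mulVec_zero]
  intro s hs
  simpa [hleft] using htaylor 0 (zero_le n) hs

theorem SatisfiesBC.eqOn (hbf : SatisfiesBC Na Nb a b f) (hbg : SatisfiesBC Na Nb a b g)
    (hab : a < b) (hinv : IsUnit (Na + Nb * Wmat n (b - a)))
    (hf : ContDiffOn ℝ n f (Icc a b)) (hg : ContDiffOn ℝ n g (Icc a b))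
    (hfg : EqOn (iteratedDerivWithin n f (Icc a b)) (iteratedDerivWithin n g (Icc a b)) (Icc a b)) :
    EqOn f g (Icc a b) := by
  have hzero := (hbf.sub hbg hab hf hg).eqOn_zero hab hinv (hf.sub hg) fun s hs => by
    rw [iteratedDerivWithin_sub hs (uniqueDiffOn_Icc hab) (hf s hs) (hg s hs), hfg hs, sub_self]
    rfl
  exact fun s hs => sub_eq_zero.mp (hzero hs)

end Uniqueness

/-- the partial-integral operator `T` with the polynomial kernel `G`
built from the boundary-condition matrices `N_a, N_b` is a bijection between `L₂`
and the subspace of `n`-times continuously differentiable functions on `[a,b]`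
satisfying the boundary conditions: `(T x)⁽ⁿ⁾ = x` with `T x` satisfying the
boundary conditions, and `T (g⁽ⁿ⁾) = g` whenever `g` satisfies them. -/
theorem fundamental_state_bijection
    (n : ℕ) (hn : 1 ≤ n) (a b : ℝ) (hab : a < b)
    (Na Nb : Matrix (Fin n) (Fin n) ℝ)
    (hinv : IsUnit (Na + Nb * Wmat n (b - a)))
    (P : Matrix (Fin n) (Fin n) ℝ)
    (hP : P = (Na + Nb * Wmat n (b - a))⁻¹ * (Nb * Wmat n (b - a)))
    (G : ℝ → ℝ → ℝ)
    (hG : ∀ s θ : ℝ,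
      G s θ = if θ ≤ s
        then dotProduct (e1vec n (s - a)) (Matrix.mulVec (1 - P) (envec n (a - θ)))
        else -(dotProduct (e1vec n (s - a)) (Matrix.mulVec P (envec n (a - θ)))))
    (T : (ℝ → ℝ) → (ℝ → ℝ))
    (hT : ∀ (x : ℝ → ℝ) (s : ℝ), T x s = ∫ θ in Set.Icc a b, G s θ * x θ)
    (BC : (ℝ → ℝ) → Prop)
    (hBC : ∀ g : ℝ → ℝ, BC g ↔ ∀ i : Fin n,
      (∑ j : Fin n, (Na i j * iteratedDerivWithin (j : ℕ) g (Set.Icc a b) a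
        + Nb i j * iteratedDerivWithin (j : ℕ) g (Set.Icc a b) b)) = 0) :
    (∀ x : ℝ → ℝ, Continuous x →
      ContDiffOn ℝ n (T x) (Set.Icc a b) ∧ BC (T x) ∧
      ∀ s ∈ Set.Icc a b, iteratedDerivWithin n (T x) (Set.Icc a b) s = x s) ∧
    (∀ g : ℝ → ℝ, ContDiffOn ℝ n g (Set.Icc a b) → BC g →
      ∀ s ∈ Set.Icc a b, T (iteratedDerivWithin n g (Set.Icc a b)) s = g s) := by
  have hud := uniqueDiffOn_Icc hab
  have hBC_iff : ∀ g, BC g ↔ SatisfiesBC Na Nb a b g := fun g => by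
    simp only [hBC, SatisfiesBC, funext_iff, Pi.add_apply, Pi.zero_apply, mulVec, dotProduct,
      jetWithin, ← Finset.sum_add_distrib]
  have hPW : (Na + Nb * Wmat n (b - a)) * P = Nb * Wmat n (b - a) := by
    rw [hP, ← Matrix.mul_assoc, mul_nonsing_inv _ ((isUnit_iff_isUnit_det _).mp hinv),
      Matrix.one_mul]
  have hTx : ∀ x, Continuous x → EqOn (T x) (greenJet n a b P x 0) (Icc a b) :=
    fun x hx s hs => by
      rw [hT, greenJet_zero P hn]
      simp_rw [hG]
      exact setIntegral_greenKernel_mul hs P hx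
  have hsolve : ∀ x : ℝ → ℝ, Continuous x → ContDiffOn ℝ n (T x) (Icc a b) ∧ BC (T x) ∧
      ∀ s ∈ Icc a b, iteratedDerivWithin n (T x) (Icc a b) s = x s := fun x hx =>
    ⟨(contDiff_greenJet_zero P hx).contDiffOn.congr (hTx x hx),
      (hBC_iff _).mpr (satisfiesBC_of_eqOn_greenJet P hab hPW hx (hTx x hx)),
      fun s hs => (iteratedDerivWithin_eqOn_greenJet P hud hx (hTx x hx) le_rfl hs).trans
        (greenJet_self P s)⟩
  refine ⟨hsolve, fun g hg hgBC s hs => ?_⟩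
  obtain ⟨x, hx, hxg⟩ :=
    (hg.continuousOn_iteratedDerivWithin le_rfl hud).exists_continuous_eqOn_Icc hab.le
  obtain ⟨hu, huBC, hun⟩ := hsolve x hx
  have hTg : T (iteratedDerivWithin n g (Icc a b)) s = T x s := by
    simp only [hT]
    exact setIntegral_congr_fun measurableSet_Icc fun θ hθ => by rw [hxg hθ]
  rw [hTg]
  exact ((hBC_iff _).mp huBC).eqOn ((hBC_iff g).mp hgBC) hab hinv hu hg
    (fun t ht => (hun t ht).trans (hxg ht)) hs
end
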